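/- Let a ∈ ℝ ∪ {−∞} and let φ : (a,∞) → ℝ be smooth with φ'(t) > 0 and φ''(t) ≥ 0 for all t. Let (x, z, θ) : [0, s₋) → (0,∞) × (a,∞) × ℝ be the maximal solution of the profile-curve system x'(s) = cos θ(s), z'(s) = sin θ(s), θ'(s) = φ'(z(s))·cos θ(s) − sin θ(s)/x(s), with x(0) = x₀ > 0, z(0) = z₀ ∈ (a,∞), θ(0) = π, and let s₀ ∈ (0, s₋) be the first time with θ(s₀) = π/2. Then: (i) 0 < θ(s) < π/2 for all s ∈ (s₀, s₋); and (ii) there exists s₁ ∈ (s₀, s₋) such that θ'(s₁) = 0, θ attains its minimum over (s₀, s₋) at s₁, and θ'(s) > 0 for all s ∈ (s₁, s₋). -/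

import Mathlib

/-!
After `s₀` the angle stays in `(0, π/2)`: on the level `π/2` one has `θ' = -1/x < 0`, and on the
level `0` one has `θ' = φ'(z) > 0`. On such an arc, differentiating `θ' = φ'(z) cos θ - sin θ / x`
at a zero of `θ'` gives `θ'' = φ''(z) sin θ cos θ + sin θ cos θ / x² > 0`, so `θ'` crosses zero at
most once, and upwards; since `θ'(s₀) = -1/x(s₀) < 0`, it remains to find a point where `θ' ≥ 0`.
If there were none, `θ` would decrease while `x` and `z` increase. On an infinite interval `x`
then grows linearly while `φ'(z) cos θ` stays bounded below, forcing `θ' > 0` eventually. On a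
finite interval the solution converges at the end point, with `x > 0`, and the local existence
theorem continues it, contradicting maximality.
-/

open Set Filter
open scoped ENNReal

def Dom (ω : ℝ≥0∞) : Set ℝ := {s : ℝ | 0 ≤ s ∧ ENNReal.ofReal s < ω}

open Real
open scoped Topology

theorem HasDerivAt.nonneg_of_forall_Ioo_le {f : ℝ → ℝ} {d c s : ℝ} (hf : HasDerivAt f d s)
    (hcs : c < s) (hle : ∀ t ∈ Ioo c s, f t ≤ f s) : 0 ≤ d := by
  have hslope : Tendsto (slope f s) (𝓝[<] s) (𝓝 d) :=
    (hasDerivAt_iff_tendsto_slope.mp hf).mono_left (nhdsWithin_mono _ fun t ht => ne_of_lt ht)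
  refine ge_of_tendsto hslope ?_
  filter_upwards [Ioo_mem_nhdsLT hcs] with t ht
  rw [slope_def_field]
  exact div_nonneg_of_nonpos (sub_nonpos.2 (hle t ht)) (sub_nonpos.2 ht.2.le)

namespace Set.OrdConnected

variable {J : Set ℝ} {f f' : ℝ → ℝ}

theorem monotoneOn_of_hasDerivAt_nonneg (hJ : J.OrdConnected)
    (hf : ∀ t ∈ J, HasDerivAt f (f' t) t) (hf' : ∀ t ∈ J, 0 ≤ f' t) : MonotoneOn f J :=
  monotoneOn_of_hasDerivWithinAt_nonneg hJ.convex
    (fun t ht => (hf t ht).continuousAt.continuousWithinAt)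
    (fun t ht => (hf t (interior_subset ht)).hasDerivWithinAt)
    (fun t ht => hf' t (interior_subset ht))

theorem antitoneOn_of_hasDerivAt_nonpos (hJ : J.OrdConnected)
    (hf : ∀ t ∈ J, HasDerivAt f (f' t) t) (hf' : ∀ t ∈ J, f' t ≤ 0) : AntitoneOn f J :=
  antitoneOn_of_hasDerivWithinAt_nonpos hJ.convex
    (fun t ht => (hf t ht).continuousAt.continuousWithinAt)
    (fun t ht => (hf t (interior_subset ht)).hasDerivWithinAt)
    (fun t ht => hf' t (interior_subset ht))

theorem lt_of_hasDerivAt_neg (hJ : J.OrdConnected) (hf : ∀ t ∈ J, HasDerivAt f (f' t) t)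
    {c L : ℝ} (hc : c ∈ J) (hfc : f c ≤ L) (hcross : ∀ t ∈ J, c ≤ t → f t = L → f' t < 0)
    {s : ℝ} (hs : s ∈ J) (hcs : c < s) : f s < L := by
  have hsub : Icc c s ⊆ J := hJ.out hc hs
  have hle : ∀ t ∈ Icc c s, f t ≤ L :=
    image_le_of_deriv_right_lt_deriv_boundary (B' := fun _ => 0)
      (fun t ht => (hf t (hsub ht)).continuousAt.continuousWithinAt)
      (fun t ht => (hf t (hsub (Ico_subset_Icc_self ht))).hasDerivWithinAt) hfc
      (fun _ => hasDerivAt_const _ L)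
      (fun t ht hft => hcross t (hsub (Ico_subset_Icc_self ht)) ht.1 hft)
  refine (hle s (right_mem_Icc.2 hcs.le)).lt_of_ne fun hfs => ?_
  have := (hf s hs).nonneg_of_forall_Ioo_le hcs fun t ht => hfs ▸ hle t (Ioo_subset_Icc_self ht)
  exact (hcross s hs hcs.le hfs).not_ge this

theorem mul_sub_le_image_sub_of_le_hasDerivAt (hJ : J.OrdConnected)
    (hf : ∀ t ∈ J, HasDerivAt f (f' t) t) {C : ℝ} (hC : ∀ t ∈ J, C ≤ f' t) {u v : ℝ}
    (hu : u ∈ J) (hv : v ∈ J) (huv : u ≤ v) : C * (v - u) ≤ f v - f u :=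
  hJ.convex.mul_sub_le_image_sub_of_le_deriv
    (fun t ht => (hf t ht).continuousAt.continuousWithinAt)
    (fun t ht => (hf t (interior_subset ht)).differentiableAt.differentiableWithinAt)
    (fun t ht => (hf t (interior_subset ht)).deriv ▸ hC t (interior_subset ht)) u hu v hv huv

theorem image_sub_le_mul_sub_of_hasDerivAt_le (hJ : J.OrdConnected)
    (hf : ∀ t ∈ J, HasDerivAt f (f' t) t) {C : ℝ} (hC : ∀ t ∈ J, f' t ≤ C) {u v : ℝ}
    (hu : u ∈ J) (hv : v ∈ J) (huv : u ≤ v) : f v - f u ≤ C * (v - u) :=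
  hJ.convex.image_sub_le_mul_sub_of_deriv_le
    (fun t ht => (hf t ht).continuousAt.continuousWithinAt)
    (fun t ht => (hf t (interior_subset ht)).differentiableAt.differentiableWithinAt)
    (fun t ht => (hf t (interior_subset ht)).deriv ▸ hC t (interior_subset ht)) u hu v hv huv

theorem isMinOn_of_hasDerivAt (hJ : J.OrdConnected) (hf : ∀ t ∈ J, HasDerivAt f (f' t) t)
    {c : ℝ} (hc : c ∈ J) (hle : ∀ t ∈ J, t ≤ c → f' t ≤ 0) (hge : ∀ t ∈ J, c ≤ t → 0 ≤ f' t) :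
    IsMinOn f J c := by
  refine isMinOn_iff.2 fun t ht => ?_
  rcases le_total t c with htc | hct
  · exact (hJ.inter ordConnected_Iic).antitoneOn_of_hasDerivAt_nonpos (fun u hu => hf u hu.1)
      (fun u hu => hle u hu.1 hu.2) ⟨ht, htc⟩ ⟨hc, mem_Iic.2 le_rfl⟩ htc
  · exact (hJ.inter ordConnected_Ici).monotoneOn_of_hasDerivAt_nonneg (fun u hu => hf u hu.1)
      (fun u hu => hge u hu.1 hu.2) ⟨hc, mem_Ici.2 le_rfl⟩ ⟨ht, hct⟩ hct

end Set.OrdConnected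

theorem MonotoneOn.exists_tendsto_nhdsLT_of_hasDerivAt_le {f f' : ℝ → ℝ} {c b C : ℝ}
    (hcb : c < b) (hmono : MonotoneOn f (Ioo c b)) (hf : ∀ t ∈ Ioo c b, HasDerivAt f (f' t) t)
    (hf' : ∀ t ∈ Ioo c b, f' t ≤ C) :
    ∃ L, Tendsto f (𝓝[<] b) (𝓝 L) ∧ ∀ t ∈ Ioo c b, f t ≤ L := by
  have hm : (c + b) / 2 ∈ Ioo c b := ⟨by linarith, by linarith⟩
  have hbdd : BddAbove (f '' Ioo c b) := by
    refine ⟨f ((c + b) / 2) + |C| * (b - c), ?_⟩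
    rintro _ ⟨t, ht, rfl⟩
    have hCb : 0 ≤ |C| * (b - c) := mul_nonneg (abs_nonneg C) (by linarith)
    rcases le_total t ((c + b) / 2) with htm | hmt
    · linarith [hmono ht hm htm]
    · have hCt : C * (t - (c + b) / 2) ≤ |C| * (b - c) :=
        (mul_le_mul_of_nonneg_right (le_abs_self C) (by linarith)).trans
          (mul_le_mul_of_nonneg_left (by linarith [ht.2, ht.1]) (abs_nonneg C))
      linarith [ordConnected_Ioo.image_sub_le_mul_sub_of_hasDerivAt_le hf hf' hm ht hmt]
  exact ⟨_, hmono.tendsto_nhdsWithin_Ioo_left (nonempty_Ioo.2 hcb) hbdd,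
    fun t ht => le_csSup hbdd (mem_image_of_mem f ht)⟩

theorem Real.sin_pos_of_mem_Ioo_zero_pi_div_two {t : ℝ} (ht : t ∈ Ioo 0 (π / 2)) : 0 < sin t :=
  sin_pos_of_mem_Ioo ⟨ht.1, ht.2.trans (half_lt_self pi_pos)⟩

theorem Real.cos_pos_of_mem_Ioo_zero_pi_div_two {t : ℝ} (ht : t ∈ Ioo 0 (π / 2)) : 0 < cos t :=
  cos_pos_of_mem_Ioo ⟨(neg_neg_of_pos pi_div_two_pos).trans ht.1, ht.2⟩

noncomputable def angleRate (φ' x z θ : ℝ → ℝ) (s : ℝ) : ℝ := φ' (z s) * cos (θ s) - sin (θ s) / x s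

structure IsProfileCurve (φ' : ℝ → ℝ) (J : Set ℝ) (x z θ : ℝ → ℝ) : Prop where
  hasDerivAt_x : ∀ s ∈ J, HasDerivAt x (cos (θ s)) s
  hasDerivAt_z : ∀ s ∈ J, HasDerivAt z (sin (θ s)) s
  hasDerivAt_θ : ∀ s ∈ J, HasDerivAt θ (angleRate φ' x z θ s) s
  x_pos : ∀ s ∈ J, 0 < x s

namespace IsProfileCurve

variable {φ' φ'' x z θ : ℝ → ℝ} {J K : Set ℝ} {s₀ s : ℝ}

theorem mono (h : IsProfileCurve φ' J x z θ) (hKJ : K ⊆ J) : IsProfileCurve φ' K x z θ :=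
  ⟨fun s hs => h.hasDerivAt_x s (hKJ hs), fun s hs => h.hasDerivAt_z s (hKJ hs),
    fun s hs => h.hasDerivAt_θ s (hKJ hs), fun s hs => h.x_pos s (hKJ hs)⟩

theorem angle_lt_pi_div_two (h : IsProfileCurve φ' J x z θ) (hJ : J.OrdConnected)
    (hs₀ : s₀ ∈ J) (hθs₀ : θ s₀ ≤ π / 2) (hs : s ∈ J) (hs₀s : s₀ < s) : θ s < π / 2 :=
  hJ.lt_of_hasDerivAt_neg h.hasDerivAt_θ hs₀ hθs₀ (fun t ht _ hθt => by
    have := h.x_pos t ht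
    simp only [angleRate, hθt, cos_pi_div_two, sin_pi_div_two, mul_zero, zero_sub,
      neg_lt_zero]
    positivity) hs hs₀s

theorem angle_pos (h : IsProfileCurve φ' J x z θ) (hJ : J.OrdConnected)
    (hφ' : ∀ s ∈ J, 0 < φ' (z s)) (hs₀ : s₀ ∈ J) (hθs₀ : 0 ≤ θ s₀) (hs : s ∈ J)
    (hs₀s : s₀ < s) : 0 < θ s :=
  neg_lt_zero.mp <| hJ.lt_of_hasDerivAt_neg (fun t ht => (h.hasDerivAt_θ t ht).neg) hs₀
    (neg_nonpos.mpr hθs₀) (fun t ht _ hθt => by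
      simpa [angleRate, neg_eq_zero.mp hθt] using hφ' t ht) hs hs₀s

theorem hasDerivAt_angleRate (h : IsProfileCurve φ' J x z θ)
    (hφ'' : ∀ s ∈ J, HasDerivAt φ' (φ'' (z s)) (z s)) (hs : s ∈ J) :
    HasDerivAt (angleRate φ' x z θ)
      (φ'' (z s) * sin (θ s) * cos (θ s) - φ' (z s) * sin (θ s) * angleRate φ' x z θ s -
        (cos (θ s) * angleRate φ' x z θ s * x s - sin (θ s) * cos (θ s)) / x s ^ 2) s := by
  have hθ := h.hasDerivAt_θ s hs
  have := (((hφ'' s hs).comp s (h.hasDerivAt_z s hs)).mul (hθ.cos)).sub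
    ((hθ.sin).div (h.hasDerivAt_x s hs) (h.x_pos s hs).ne')
  exact this.congr_deriv (by rw [Function.comp_apply]; ring)

theorem angleRate_pos_of_nonneg (h : IsProfileCurve φ' J x z θ) (hJ : J.OrdConnected)
    (hθ : ∀ s ∈ J, θ s ∈ Ioo 0 (π / 2))
    (hφ'' : ∀ s ∈ J, HasDerivAt φ' (φ'' (z s)) (z s)) (hφ''nn : ∀ s ∈ J, 0 ≤ φ'' (z s))
    ⦃r s : ℝ⦄ (hr : r ∈ J) (hr0 : 0 ≤ angleRate φ' x z θ r) (hs : s ∈ J) (hrs : r < s) :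
    0 < angleRate φ' x z θ s := by
  refine neg_lt_zero.mp <| hJ.lt_of_hasDerivAt_neg
    (fun t ht => (h.hasDerivAt_angleRate hφ'' ht).neg) hr (neg_nonpos.mpr hr0)
    (fun t ht _ hzero => ?_) hs hrs
  rw [Pi.neg_apply, neg_eq_zero] at hzero
  have hsin := sin_pos_of_mem_Ioo_zero_pi_div_two (hθ t ht)
  have hcos := cos_pos_of_mem_Ioo_zero_pi_div_two (hθ t ht)
  have := h.x_pos t ht
  have := hφ''nn t ht
  have hpos : 0 < φ'' (z t) * sin (θ t) * cos (θ t) + sin (θ t) * cos (θ t) / x t ^ 2 := by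
    positivity
  rw [hzero]
  convert neg_lt_zero.mpr hpos using 1
  ring

theorem isMinOn_angle_of_angleRate_eq_zero (h : IsProfileCurve φ' J x z θ)
    (hJ : J.OrdConnected) (hθ : ∀ s ∈ J, θ s ∈ Ioo 0 (π / 2))
    (hφ'' : ∀ s ∈ J, HasDerivAt φ' (φ'' (z s)) (z s)) (hφ''nn : ∀ s ∈ J, 0 ≤ φ'' (z s))
    {s₁ : ℝ} (hs₁ : s₁ ∈ J) (hzero : angleRate φ' x z θ s₁ = 0) : IsMinOn θ J s₁ := by
  have hafter := h.angleRate_pos_of_nonneg hJ hθ hφ'' hφ''nn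
  refine hJ.isMinOn_of_hasDerivAt h.hasDerivAt_θ hs₁ (fun s hs hss₁ => ?_) (fun s hs hs₁s => ?_)
  · by_contra! hpos
    exact (hafter hs hpos.le hs₁ (hss₁.lt_of_ne fun he => hpos.ne' (he ▸ hzero))).ne' hzero
  · rcases hs₁s.eq_or_lt with rfl | hlt
    · exact hzero.ge
    · exact (hafter hs₁ hzero.ge hs hlt).le

theorem exists_angleRate_pos_of_not_bddAbove (h : IsProfileCurve φ' J x z θ)
    (hJ : J.OrdConnected) (hθ : ∀ s ∈ J, θ s ∈ Ioo 0 (π / 2)) (hφ' : ∀ s ∈ J, 0 < φ' (z s))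
    (hφ'' : ∀ s ∈ J, HasDerivAt φ' (φ'' (z s)) (z s)) (hφ''nn : ∀ s ∈ J, 0 ≤ φ'' (z s))
    (hJb : ¬BddAbove J) (hs₀ : s₀ ∈ J) : ∃ s ∈ J, 0 < angleRate φ' x z θ s := by
  by_contra! hneg
  set c := cos (θ s₀)
  set p := φ' (z s₀)
  have hc : 0 < c := cos_pos_of_mem_Ioo_zero_pi_div_two (hθ s₀ hs₀)
  have hp : 0 < p := hφ' s₀ hs₀
  have hθanti : AntitoneOn θ J := hJ.antitoneOn_of_hasDerivAt_nonpos h.hasDerivAt_θ hneg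
  have hcos : ∀ s ∈ J, s₀ ≤ s → c ≤ cos (θ s) := fun s hs hs₀s =>
    cos_le_cos_of_nonneg_of_le_pi (hθ s hs).1.le
      (by linarith [(hθ s₀ hs₀).2, pi_pos]) (hθanti hs₀ hs hs₀s)
  have hφ'z : ∀ s ∈ J, s₀ ≤ s → p ≤ φ' (z s) :=
    fun s hs => hJ.monotoneOn_of_hasDerivAt_nonneg
      (fun t ht => (hφ'' t ht).comp t (h.hasDerivAt_z t ht))
      (fun t ht => mul_nonneg (hφ''nn t ht) (sin_pos_of_mem_Ioo_zero_pi_div_two (hθ t ht)).le)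
      hs₀ hs
  have hx : ∀ s ∈ J, s₀ ≤ s → c * (s - s₀) ≤ x s - x s₀ := fun s hs hs₀s =>
    (hJ.inter ordConnected_Ici).mul_sub_le_image_sub_of_le_hasDerivAt
      (fun t ht => h.hasDerivAt_x t ht.1) (fun t ht => hcos t ht.1 ht.2)
      ⟨hs₀, mem_Ici.2 le_rfl⟩ ⟨hs, hs₀s⟩ hs₀s
  obtain ⟨s, hs, hs_gt⟩ := not_bddAbove_iff.mp hJb (s₀ + 1 / (p * c ^ 2))
  have hs₀s : s₀ ≤ s := by linarith [show 0 < 1 / (p * c ^ 2) by positivity]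
  have hxs : 0 < x s := h.x_pos s hs
  have hfar : 1 < p * c * x s := by
    calc 1 < (s - s₀) * (p * c ^ 2) := (div_lt_iff₀ (by positivity)).mp (by linarith)
      _ = p * c * (c * (s - s₀)) := by ring
      _ < p * c * x s :=
        mul_lt_mul_of_pos_left (by linarith [h.x_pos s₀ hs₀, hx s hs hs₀s]) (by positivity)
  have h1 : sin (θ s) / x s < p * c := by
    rw [div_lt_iff₀ hxs]
    linarith [sin_le_one (θ s)]
  have h2 : p * c ≤ φ' (z s) * cos (θ s) :=
    mul_le_mul (hφ'z s hs hs₀s) (hcos s hs hs₀s) hc.le (hφ' s hs).le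
  exact (hneg s hs).not_gt (by unfold angleRate; linarith)

theorem exists_tendsto_of_angleRate_nonpos {c b : ℝ} (h : IsProfileCurve φ' (Ioo c b) x z θ)
    (hcb : c < b) (hθ : ∀ s ∈ Ioo c b, θ s ∈ Ioo 0 (π / 2))
    (hneg : ∀ s ∈ Ioo c b, angleRate φ' x z θ s ≤ 0) :
    ∃ X Z Θ, Tendsto (fun s => (x s, z s, θ s)) (𝓝[<] b) (𝓝 (X, Z, Θ)) ∧
      ∀ s ∈ Ioo c b, x s ≤ X ∧ z s ≤ Z := by
  obtain ⟨X, hX, hxX⟩ := MonotoneOn.exists_tendsto_nhdsLT_of_hasDerivAt_le hcb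
    (ordConnected_Ioo.monotoneOn_of_hasDerivAt_nonneg h.hasDerivAt_x
      fun t ht => (cos_pos_of_mem_Ioo_zero_pi_div_two (hθ t ht)).le)
    h.hasDerivAt_x fun t _ => cos_le_one _
  obtain ⟨Z, hZ, hzZ⟩ := MonotoneOn.exists_tendsto_nhdsLT_of_hasDerivAt_le hcb
    (ordConnected_Ioo.monotoneOn_of_hasDerivAt_nonneg h.hasDerivAt_z
      fun t ht => (sin_pos_of_mem_Ioo_zero_pi_div_two (hθ t ht)).le)
    h.hasDerivAt_z fun t _ => sin_le_one _
  have hθanti : AntitoneOn θ (Ioo c b) :=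
    ordConnected_Ioo.antitoneOn_of_hasDerivAt_nonpos h.hasDerivAt_θ hneg
  have hbdd : BddBelow (θ '' Ioo c b) := ⟨0, by rintro _ ⟨t, ht, rfl⟩; exact (hθ t ht).1.le⟩
  exact ⟨X, Z, _, hX.prodMk_nhds
      (hZ.prodMk_nhds (hθanti.tendsto_nhdsWithin_Ioo_left (nonempty_Ioo.2 hcb) hbdd)),
    fun s hs => ⟨hxX s hs, hzZ s hs⟩⟩

end IsProfileCurve

section Extension

variable {E : Type*} [NormedAddCommGroup E] [NormedSpace ℝ E] {V : E → E} {p : E} {a b : ℝ}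

theorem hasDerivAt_ite_of_tendsto {y α : ℝ → E} (hab : a < b) (hV : ContinuousAt V p)
    (hy : ∀ t ∈ Ioo a b, HasDerivAt y (V (y t)) t) (hlim : Tendsto y (𝓝[<] b) (𝓝 p))
    (hα : HasDerivAt α (V p) b) (hαb : α b = p) :
    HasDerivAt (fun t => if t < b then y t else α t) (V p) b := by
  set w : ℝ → E := fun t => if t < b then y t else α t
  have hwy : EqOn w y (Ioo a b) := fun t ht => if_pos ht.2
  have hwb : w b = p := (if_neg (lt_irrefl b)).trans hαb
  have hleft : HasDerivWithinAt w (V p) (Iic b) b := by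
    refine hasDerivWithinAt_Iic_of_tendsto_deriv (s := Ioo a b)
      (fun t ht => ((hy t ht).congr_of_eventuallyEq
        (eventuallyEq_of_mem (Ioo_mem_nhds ht.1 ht.2) hwy)).differentiableAt.differentiableWithinAt)
      ?_ (Ioo_mem_nhdsLT hab) ?_
    · rw [ContinuousWithinAt, hwb]
      exact (hlim.mono_left (nhdsWithin_mono _ fun t ht => ht.2)).congr'
        (eventuallyEq_nhdsWithin_of_eqOn hwy).symm
    · refine ((hV.tendsto.comp hlim)).congr' ?_
      filter_upwards [Ioo_mem_nhdsLT hab] with t ht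
      exact ((hy t ht).congr_of_eventuallyEq
        (eventuallyEq_of_mem (Ioo_mem_nhds ht.1 ht.2) hwy)).deriv.symm
  have hright : HasDerivWithinAt w (V p) (Ici b) b :=
    hα.hasDerivWithinAt.congr (fun t ht => if_neg (not_lt.2 ht)) (if_neg (lt_irrefl b))
  simpa only [Iic_union_Ici, hasDerivWithinAt_univ] using hleft.union hright

theorem exists_hasDerivWithinAt_Ico_extension [CompleteSpace E] {y : ℝ → E} {U : Set E}
    (hab : a < b) (hV : ContDiffAt ℝ 1 V p) (hU : U ∈ 𝓝 p)
    (hy : ∀ t ∈ Ico a b, HasDerivWithinAt y (V (y t)) (Ico a b) t)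
    (hlim : Tendsto y (𝓝[<] b) (𝓝 p)) :
    ∃ b' > b, ∃ w : ℝ → E, EqOn w y (Ico a b) ∧ (∀ t ∈ Ico b b', w t ∈ U) ∧
      ∀ t ∈ Ico a b', HasDerivWithinAt w (V (w t)) (Ico a b') t := by
  obtain ⟨α, hαb, ε, hε, hα⟩ :=
    hV.exists_forall_mem_closedBall_exists_eq_forall_mem_Ioo_hasDerivAt₀ b
  have hnear : ∀ᶠ t in 𝓝 b, α t ∈ U ∧ t ∈ Ioo (b - ε) (b + ε) :=
    ((hα b ⟨by linarith, by linarith⟩).continuousAt.tendsto.eventually_mem (hαb ▸ hU)).and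
      (Ioo_mem_nhds (by linarith) (by linarith))
  obtain ⟨b', hbb', hb'⟩ := mem_nhdsGE_iff_exists_Ico_subset.mp (nhdsWithin_le_nhds hnear)
  set w : ℝ → E := fun t => if t < b then y t else α t
  have hwy : EqOn w y (Ico a b) := fun t ht => if_pos ht.2
  have hwα : EqOn w α (Ici b) := fun t ht => if_neg (not_lt.2 ht)
  refine ⟨b', hbb', w, hwy, fun t ht => hwα ht.1 ▸ (hb' ht).1, fun t ht => ?_⟩
  rcases lt_trichotomy t b with htb | htb | htb
  · have hIco : Ico a b ∈ 𝓝[Ico a b'] t :=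
      mem_of_superset (inter_mem_nhdsWithin _ (Iio_mem_nhds htb)) fun u hu => ⟨hu.1.1, hu.2⟩
    rw [hwy ⟨ht.1, htb⟩]
    exact ((hy t ⟨ht.1, htb⟩).congr hwy (hwy ⟨ht.1, htb⟩)).mono_of_mem_nhdsWithin hIco
  · rw [htb, show w b = p from (hwα (le_refl b)).trans hαb]
    exact (hasDerivAt_ite_of_tendsto hab hV.continuousAt
      (fun u hu => (hy u (Ioo_subset_Ico_self hu)).hasDerivAt (Ico_mem_nhds hu.1 hu.2)) hlim
      (hαb ▸ hα b ⟨by linarith, by linarith⟩) hαb).hasDerivWithinAt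
  · exact ((hα t (hb' ⟨htb.le, ht.2⟩).2).congr_of_eventuallyEq
      (eventuallyEq_of_mem (Ioi_mem_nhds htb) (hwα.mono Ioi_subset_Ici_self))).hasDerivWithinAt
      |>.congr_deriv (by rw [hwα htb.le])

end Extension

theorem Dom_eq_Ico {ω : ℝ≥0∞} (hω : ω ≠ ⊤) : Dom ω = Ico 0 ω.toReal := by
  ext s
  exact and_congr_right fun hs => ENNReal.ofReal_lt_iff_lt_toReal hs hω

theorem Dom_top : Dom ⊤ = Ici 0 := by
  ext s
  simp [Dom]

theorem ordConnected_Dom (ω : ℝ≥0∞) : (Dom ω).OrdConnected :=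
  ⟨fun _ hu _ hv _ ht => ⟨hu.1.trans ht.1, (ENNReal.ofReal_le_ofReal ht.2).trans_lt hv.2⟩⟩

theorem Dom_mem_nhds {ω : ℝ≥0∞} {s : ℝ} (hs : s ∈ Dom ω) (hs0 : 0 < s) : Dom ω ∈ 𝓝 s := by
  rcases eq_or_ne ω ⊤ with rfl | hω
  · rw [Dom_top]
    exact Ici_mem_nhds hs0
  · rw [Dom_eq_Ico hω] at hs ⊢
    exact Ico_mem_nhds hs0 hs.2

structure IsProfileSolution (a : EReal) (φ' : ℝ → ℝ) (x₀ z₀ θ₀ : ℝ) (ω : ℝ≥0∞)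
    (x z θ : ℝ → ℝ) : Prop where
  x_zero : x 0 = x₀
  z_zero : z 0 = z₀
  θ_zero : θ 0 = θ₀
  x_pos : ∀ s ∈ Dom ω, 0 < x s
  z_mem : ∀ s ∈ Dom ω, a < (z s : EReal)
  hasDerivWithinAt_x : ∀ s ∈ Dom ω, HasDerivWithinAt x (cos (θ s)) (Dom ω) s
  hasDerivWithinAt_z : ∀ s ∈ Dom ω, HasDerivWithinAt z (sin (θ s)) (Dom ω) s
  hasDerivWithinAt_θ : ∀ s ∈ Dom ω, HasDerivWithinAt θ (angleRate φ' x z θ s) (Dom ω) s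

noncomputable def profileField (φ' : ℝ → ℝ) (w : ℝ × ℝ × ℝ) : ℝ × ℝ × ℝ :=
  (cos w.2.2, sin w.2.2, φ' w.2.1 * cos w.2.2 - sin w.2.2 / w.1)

theorem contDiffAt_profileField {φ' : ℝ → ℝ} {X Z Θ : ℝ} (hφ' : ContDiffAt ℝ 1 φ' Z)
    (hX : X ≠ 0) : ContDiffAt ℝ 1 (profileField φ') (X, Z, Θ) := by
  have hcos : ContDiffAt ℝ 1 (fun w : ℝ × ℝ × ℝ => cos w.2.2) (X, Z, Θ) := by fun_prop
  have hsin : ContDiffAt ℝ 1 (fun w : ℝ × ℝ × ℝ => sin w.2.2) (X, Z, Θ) := by fun_prop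
  have hφ'z : ContDiffAt ℝ 1 (fun w : ℝ × ℝ × ℝ => φ' w.2.1) (X, Z, Θ) :=
    hφ'.comp (X, Z, Θ) (by fun_prop)
  exact hcos.prodMk (hsin.prodMk ((hφ'z.mul hcos).sub (hsin.div (by fun_prop) hX)))

namespace IsProfileSolution

variable {a : EReal} {φ' φ'' : ℝ → ℝ} {x₀ z₀ θ₀ : ℝ} {ω : ℝ≥0∞} {x z θ : ℝ → ℝ} {s₀ : ℝ}

theorem isProfileCurve (h : IsProfileSolution a φ' x₀ z₀ θ₀ ω x z θ) :
    IsProfileCurve φ' (Dom ω ∩ Ioi 0) x z θ := by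
  exact ⟨fun s hs => (h.hasDerivWithinAt_x s hs.1).hasDerivAt (Dom_mem_nhds hs.1 hs.2),
    fun s hs => (h.hasDerivWithinAt_z s hs.1).hasDerivAt (Dom_mem_nhds hs.1 hs.2),
    fun s hs => (h.hasDerivWithinAt_θ s hs.1).hasDerivAt (Dom_mem_nhds hs.1 hs.2),
    fun s hs => h.x_pos s hs.1⟩

theorem exists_extension (h : IsProfileSolution a φ' x₀ z₀ θ₀ ω x z θ) (hω : ω ≠ ⊤)
    (hω0 : 0 < ω) {X Z Θ : ℝ} (hX : 0 < X) (hZ : a < Z) (hφ' : ContDiffAt ℝ 1 φ' Z)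
    (hlim : Tendsto (fun s => (x s, z s, θ s)) (𝓝[<] ω.toReal) (𝓝 (X, Z, Θ))) :
    ∃ ω' > ω, ∃ x' z' θ' : ℝ → ℝ, IsProfileSolution a φ' x₀ z₀ θ₀ ω' x' z' θ' := by
  obtain ⟨hx0, hz0, hθ0, hxpos, h.z_mem, hdx, hdz, hdθ⟩ := h
  set b := ω.toReal
  have hb : 0 < b := ENNReal.toReal_pos hω0.ne' hω
  set U : Set (ℝ × ℝ × ℝ) := {w | 0 < w.1 ∧ a < (w.2.1 : EReal)}
  have hU : U ∈ 𝓝 (X, Z, Θ) :=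
    ((isOpen_lt continuous_const continuous_fst).inter (isOpen_lt continuous_const
      (continuous_coe_real_ereal.comp (continuous_fst.comp continuous_snd)))).mem_nhds ⟨hX, hZ⟩
  have hy : ∀ t ∈ Ico 0 b, HasDerivWithinAt (fun s => (x s, z s, θ s))
      (profileField φ' (x t, z t, θ t))
      (Ico 0 b) t := by
    rw [← Dom_eq_Ico hω]
    exact fun t ht => (hdx t ht).prodMk ((hdz t ht).prodMk (hdθ t ht))
  obtain ⟨b', hbb', w, hwy, hwU, hw⟩ := exists_hasDerivWithinAt_Ico_extension hb
    (contDiffAt_profileField hφ' hX.ne') hU hy hlim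
  have hDom' : Dom (ENNReal.ofReal b') = Ico 0 b' := by
    rw [Dom_eq_Ico ENNReal.ofReal_ne_top, ENNReal.toReal_ofReal (by linarith)]
  have hwU' : ∀ t ∈ Ico 0 b', w t ∈ U := by
    intro t ht
    rcases lt_or_ge t b with htb | htb
    · rw [hwy ⟨ht.1, htb⟩]
      have htD : t ∈ Dom ω := (Dom_eq_Ico hω).symm ▸ ⟨ht.1, htb⟩
      exact ⟨hxpos t htD, h.z_mem t htD⟩
    · exact hwU t ⟨htb, ht.2⟩
  have hw0 : w 0 = (x 0, z 0, θ 0) := hwy ⟨le_rfl, hb⟩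
  refine ⟨ENNReal.ofReal b', (ENNReal.lt_ofReal_iff_toReal_lt hω).2 hbb',
    fun t => (w t).1, fun t => (w t).2.1, fun t => (w t).2.2,
    ⟨?_, ?_, ?_, ?_, ?_, ?_, ?_, ?_⟩⟩ <;> simp only [hDom', hw0]
  · exact hx0
  · exact hz0
  · exact hθ0
  · exact fun t ht => (hwU' t ht).1
  · exact fun t ht => (hwU' t ht).2
  all_goals intro t ht
  · simpa [profileField] using (hw t ht).hasFDerivWithinAt.fst.hasDerivWithinAt
  · simpa [profileField] using (hw t ht).hasFDerivWithinAt.snd.fst.hasDerivWithinAt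
  · simpa [profileField, angleRate] using (hw t ht).hasFDerivWithinAt.snd.snd.hasDerivWithinAt


theorem angle_mem_Ioo (h : IsProfileSolution a φ' x₀ z₀ θ₀ ω x z θ)
    (hφ' : ∀ t : ℝ, a < (t : EReal) → 0 < φ' t) (hs₀pos : 0 < s₀) (hs₀ : s₀ ∈ Dom ω)
    (hθs₀ : θ s₀ = π / 2) {s : ℝ} (hs : s ∈ Dom ω) (hs₀s : s₀ < s) : θ s ∈ Ioo 0 (π / 2) :=
  have hJ := (ordConnected_Dom ω).inter ordConnected_Ioi
  have hs₀J : s₀ ∈ Dom ω ∩ Ioi 0 := ⟨hs₀, hs₀pos⟩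
  have hsJ : s ∈ Dom ω ∩ Ioi 0 := ⟨hs, hs₀pos.trans hs₀s⟩
  ⟨h.isProfileCurve.angle_pos hJ (fun t ht => hφ' _ (h.z_mem t ht.1)) hs₀J
      (by rw [hθs₀]; positivity) hsJ hs₀s,
    h.isProfileCurve.angle_lt_pi_div_two hJ hs₀J hθs₀.le hsJ hs₀s⟩

theorem exists_angleRate_nonneg (h : IsProfileSolution a φ' x₀ z₀ θ₀ ω x z θ)
    (hmax : ∀ ω', ω < ω' → ¬∃ x' z' θ' : ℝ → ℝ, IsProfileSolution a φ' x₀ z₀ θ₀ ω' x' z' θ')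
    (hφ' : ∀ t : ℝ, a < (t : EReal) → 0 < φ' t)
    (hφ'' : ∀ t : ℝ, a < (t : EReal) → HasDerivAt φ' (φ'' t) t)
    (hφ''nn : ∀ t : ℝ, a < (t : EReal) → 0 ≤ φ'' t)
    (hφ'C1 : ∀ t : ℝ, a < (t : EReal) → ContDiffAt ℝ 1 φ' t) (hs₀pos : 0 < s₀)
    (hs₀ : s₀ ∈ Dom ω) (hwing : ∀ s ∈ Dom ω, s₀ < s → θ s ∈ Ioo 0 (π / 2)) :
    ∃ s ∈ Dom ω, s₀ < s ∧ 0 ≤ angleRate φ' x z θ s := by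
  by_contra! hneg
  have hcurve : IsProfileCurve φ' (Dom ω ∩ Ioi s₀) x z θ :=
    h.isProfileCurve.mono fun s hs => ⟨hs.1, hs₀pos.trans hs.2⟩
  rcases eq_or_ne ω ⊤ with rfl | hω
  · obtain ⟨s, hs, hpos⟩ := hcurve.exists_angleRate_pos_of_not_bddAbove
      ((ordConnected_Dom ⊤).inter ordConnected_Ioi) (fun s hs => hwing s hs.1 hs.2)
      (fun s hs => hφ' _ (h.z_mem s hs.1)) (fun s hs => hφ'' _ (h.z_mem s hs.1))
      (fun s hs => hφ''nn _ (h.z_mem s hs.1))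
      (by rw [Dom_top, inter_eq_right.2 (Ioi_subset_Ici hs₀pos.le)]; exact not_bddAbove_Ioi s₀)
      (s₀ := s₀ + 1) ⟨by rw [Dom_top]; exact mem_Ici.2 (by linarith), by simp⟩
    exact (hneg s hs.1 hs.2).not_gt hpos
  · have hK : Dom ω ∩ Ioi s₀ = Ioo s₀ ω.toReal := by
      ext s
      simp only [Dom_eq_Ico hω, mem_inter_iff, mem_Ico, mem_Ioi, mem_Ioo]
      exact ⟨fun hs => ⟨hs.2, hs.1.2⟩, fun hs => ⟨⟨hs₀pos.le.trans hs.1.le, hs.2⟩, hs.1⟩⟩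
    have hs₀b : s₀ < ω.toReal := (Dom_eq_Ico hω ▸ hs₀ : s₀ ∈ Ico 0 ω.toReal).2
    rw [hK] at hcurve
    obtain ⟨X, Z, Θ, hlim, hbound⟩ := hcurve.exists_tendsto_of_angleRate_nonpos hs₀b
      (fun s hs => hwing s (hK ▸ hs).1 hs.1) (fun s hs => (hneg s (hK ▸ hs).1 hs.1).le)
    have hmid : (s₀ + ω.toReal) / 2 ∈ Ioo s₀ ω.toReal := ⟨by linarith, by linarith⟩
    have hmidD : (s₀ + ω.toReal) / 2 ∈ Dom ω := (hK ▸ hmid).1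
    have hZ : a < (Z : EReal) :=
      (h.z_mem _ hmidD).trans_le (EReal.coe_le_coe_iff.2 (hbound _ hmid).2)
    obtain ⟨ω', hω', x', z', θ', h'⟩ := h.exists_extension hω
      ((ENNReal.ofReal_pos.2 hs₀pos).trans hs₀.2)
      ((hcurve.x_pos _ hmid).trans_le (hbound _ hmid).1) hZ (hφ'C1 Z hZ) hlim
    exact hmax ω' hω' ⟨x', z', θ', h'⟩

theorem exists_angleRate_eq_zero (h : IsProfileSolution a φ' x₀ z₀ θ₀ ω x z θ)
    (hmax : ∀ ω', ω < ω' → ¬∃ x' z' θ' : ℝ → ℝ, IsProfileSolution a φ' x₀ z₀ θ₀ ω' x' z' θ')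
    (hφ' : ∀ t : ℝ, a < (t : EReal) → 0 < φ' t)
    (hφ'' : ∀ t : ℝ, a < (t : EReal) → HasDerivAt φ' (φ'' t) t)
    (hφ''nn : ∀ t : ℝ, a < (t : EReal) → 0 ≤ φ'' t)
    (hφ'C1 : ∀ t : ℝ, a < (t : EReal) → ContDiffAt ℝ 1 φ' t) (hs₀pos : 0 < s₀)
    (hs₀ : s₀ ∈ Dom ω) (hθs₀ : θ s₀ = π / 2) :
    ∃ s₁ ∈ Dom ω, s₀ < s₁ ∧ angleRate φ' x z θ s₁ = 0 ∧ IsMinOn θ (Dom ω ∩ Ioi s₀) s₁ ∧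
      ∀ s ∈ Dom ω, s₁ < s → 0 < angleRate φ' x z θ s := by
  have hwing : ∀ s ∈ Dom ω, s₀ < s → θ s ∈ Ioo 0 (π / 2) :=
    fun s hs hs₀s => h.angle_mem_Ioo hφ' hs₀pos hs₀ hθs₀ hs hs₀s
  set K := Dom ω ∩ Ioi s₀
  have hK : K.OrdConnected := (ordConnected_Dom ω).inter ordConnected_Ioi
  have hcurve : IsProfileCurve φ' K x z θ :=
    h.isProfileCurve.mono fun s hs => ⟨hs.1, hs₀pos.trans hs.2⟩
  have hθK : ∀ s ∈ K, θ s ∈ Ioo 0 (π / 2) := fun s hs => hwing s hs.1 hs.2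
  have hφ''K : ∀ s ∈ K, HasDerivAt φ' (φ'' (z s)) (z s) := fun s hs => hφ'' _ (h.z_mem s hs.1)
  have hφ''nnK : ∀ s ∈ K, 0 ≤ φ'' (z s) := fun s hs => hφ''nn _ (h.z_mem s hs.1)
  have hs₀neg : angleRate φ' x z θ s₀ < 0 := by
    have := h.x_pos s₀ hs₀
    simp only [angleRate, hθs₀, cos_pi_div_two, sin_pi_div_two, mul_zero, zero_sub, neg_lt_zero]
    positivity
  obtain ⟨t, ht, hs₀t, ht0⟩ :=
    h.exists_angleRate_nonneg hmax hφ' hφ'' hφ''nn hφ'C1 hs₀pos hs₀ hwing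
  have hIcc : Icc s₀ t ⊆ Dom ω ∩ Ioi 0 :=
    ((ordConnected_Dom ω).inter ordConnected_Ioi).out ⟨hs₀, hs₀pos⟩ ⟨ht, hs₀pos.trans hs₀t⟩
  have hcont : ContinuousOn (angleRate φ' x z θ) (Icc s₀ t) := fun s hs =>
    (h.isProfileCurve.hasDerivAt_angleRate (fun u hu => hφ'' _ (h.z_mem u hu.1))
      (hIcc hs)).continuousAt.continuousWithinAt
  obtain ⟨s₁, ⟨hs₀s₁, hs₁t⟩, hs₁⟩ := intermediate_value_Icc hs₀t.le hcont ⟨hs₀neg.le, ht0⟩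
  have hs₁K : s₁ ∈ K :=
    ⟨(hIcc ⟨hs₀s₁, hs₁t⟩).1, hs₀s₁.lt_of_ne fun he => hs₀neg.ne (he ▸ hs₁)⟩
  exact ⟨s₁, hs₁K.1, hs₁K.2, hs₁,
    hcurve.isMinOn_angle_of_angleRate_eq_zero hK hθK hφ''K hφ''nnK hs₁K hs₁,
    fun s hs hs₁s => hcurve.angleRate_pos_of_nonneg hK hθK hφ''K hφ''nnK hs₁K hs₁.ge
      ⟨hs, hs₁K.2.trans hs₁s⟩ hs₁s⟩

end IsProfileSolution

theorem stmt_13_general (a : EReal) (φ φ' φ'' : ℝ → ℝ)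
    (hφsm : ContDiffOn ℝ (⊤ : ℕ∞) φ {t : ℝ | a < (t : EReal)})
    (hφd : ∀ t : ℝ, a < (t : EReal) → HasDerivAt φ (φ' t) t)
    (hφd2 : ∀ t : ℝ, a < (t : EReal) → HasDerivAt φ' (φ'' t) t)
    (hφ'pos : ∀ t : ℝ, a < (t : EReal) → 0 < φ' t)
    (hφ''nn : ∀ t : ℝ, a < (t : EReal) → 0 ≤ φ'' t)
    (x₀ z₀ : ℝ)
    (sm : ℝ≥0∞)
    (x z θ : ℝ → ℝ)
    (hx0 : x 0 = x₀) (hz0 : z 0 = z₀) (hθ0 : θ 0 = Real.pi)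
    (hxpos : ∀ s ∈ Dom sm, 0 < x s)
    (hzmem : ∀ s ∈ Dom sm, a < (z s : EReal))
    (hdx : ∀ s ∈ Dom sm, HasDerivWithinAt x (Real.cos (θ s)) (Dom sm) s)
    (hdz : ∀ s ∈ Dom sm, HasDerivWithinAt z (Real.sin (θ s)) (Dom sm) s)
    (hdθ : ∀ s ∈ Dom sm, HasDerivWithinAt θ
      (φ' (z s) * Real.cos (θ s) - Real.sin (θ s) / x s) (Dom sm) s)
    -- maximality: no solution with the same initial data on a larger interval
    (hmax : ∀ sm' : ℝ≥0∞, sm < sm' →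
      ¬ ∃ x' z' θ' : ℝ → ℝ,
        x' 0 = x₀ ∧ z' 0 = z₀ ∧ θ' 0 = Real.pi ∧
        (∀ s ∈ Dom sm', 0 < x' s) ∧
        (∀ s ∈ Dom sm', a < (z' s : EReal)) ∧
        (∀ s ∈ Dom sm', HasDerivWithinAt x' (Real.cos (θ' s)) (Dom sm') s) ∧
        (∀ s ∈ Dom sm', HasDerivWithinAt z' (Real.sin (θ' s)) (Dom sm') s) ∧
        (∀ s ∈ Dom sm', HasDerivWithinAt θ'
          (φ' (z' s) * Real.cos (θ' s) - Real.sin (θ' s) / x' s) (Dom sm') s))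
    -- `s₀` is the first time at which `θ = π/2`
    (s₀ : ℝ) (hs₀pos : 0 < s₀) (hs₀mem : ENNReal.ofReal s₀ < sm)
    (hs₀ : θ s₀ = Real.pi / 2) :
    -- (i)
    (∀ s : ℝ, s₀ < s → s ∈ Dom sm → 0 < θ s ∧ θ s < Real.pi / 2) ∧
    -- (ii)
    (∃ s₁ : ℝ, s₀ < s₁ ∧ s₁ ∈ Dom sm ∧
      φ' (z s₁) * Real.cos (θ s₁) - Real.sin (θ s₁) / x s₁ = 0 ∧
      (∀ s : ℝ, s₀ < s → s ∈ Dom sm → θ s₁ ≤ θ s) ∧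
      (∀ s : ℝ, s₁ < s → s ∈ Dom sm →
        0 < φ' (z s) * Real.cos (θ s) - Real.sin (θ s) / x s)) := by
  have hS : IsOpen {t : ℝ | a < (t : EReal)} := isOpen_lt continuous_const continuous_coe_real_ereal
  have hφ'C1 : ∀ t : ℝ, a < (t : EReal) → ContDiffAt ℝ 1 φ' t := fun t ht =>
    ((hφsm.deriv_of_isOpen hS (WithTop.coe_le_coe.2 le_top)).congr
      fun u hu => (hφd u hu).deriv.symm).contDiffAt (hS.mem_nhds ht)
  have hsol : IsProfileSolution a φ' x₀ z₀ π sm x z θ :=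
    ⟨hx0, hz0, hθ0, hxpos, hzmem, hdx, hdz, hdθ⟩
  have hmax' : ∀ ω', sm < ω' → ¬∃ x' z' θ' : ℝ → ℝ, IsProfileSolution a φ' x₀ z₀ π ω' x' z' θ' :=
    fun ω' hω' ⟨x', z', θ', h'⟩ => hmax ω' hω' ⟨x', z', θ', h'.x_zero, h'.z_zero, h'.θ_zero,
      h'.x_pos, h'.z_mem, h'.hasDerivWithinAt_x, h'.hasDerivWithinAt_z, h'.hasDerivWithinAt_θ⟩
  have hs₀D : s₀ ∈ Dom sm := ⟨hs₀pos.le, hs₀mem⟩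
  obtain ⟨s₁, hs₁, hs₀s₁, hzero, hmin, hpos⟩ :=
    hsol.exists_angleRate_eq_zero hmax' hφ'pos hφd2 hφ''nn hφ'C1 hs₀pos hs₀D hs₀
  exact ⟨fun s hs₀s hs => hsol.angle_mem_Ioo hφ'pos hs₀pos hs₀D hs₀ hs hs₀s, s₁, hs₀s₁, hs₁,
    hzero, fun s hs₀s hs => isMinOn_iff.1 hmin s ⟨hs, hs₀s⟩, fun s hs₁s hs => hpos s hs hs₁s⟩

/-- (Wing-like shape of the left branch of catenoid-type generating
curves.)  With hypotheses as in Statement 12 and `s₀` the first time with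
`θ(s₀) = π/2`: (i) `0 < θ < π/2` on `(s₀, s₋)`; and (ii) there is `s₁ ∈ (s₀, s₋)` with
`θ'(s₁) = 0` at which `θ` attains its minimum over `(s₀, s₋)`, and `θ' > 0` on
`(s₁, s₋)`. -/
theorem stmt_13 (a : EReal) (φ φ' φ'' : ℝ → ℝ)
    (hφsm : ContDiffOn ℝ (⊤ : ℕ∞) φ {t : ℝ | a < (t : EReal)})
    (hφd : ∀ t : ℝ, a < (t : EReal) → HasDerivAt φ (φ' t) t)
    (hφd2 : ∀ t : ℝ, a < (t : EReal) → HasDerivAt φ' (φ'' t) t)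
    (hφ'pos : ∀ t : ℝ, a < (t : EReal) → 0 < φ' t)
    (hφ''nn : ∀ t : ℝ, a < (t : EReal) → 0 ≤ φ'' t)
    (x₀ z₀ : ℝ) (hx₀ : 0 < x₀) (hz₀ : a < (z₀ : EReal))
    (sm : ℝ≥0∞) (hsm : 0 < sm)
    (x z θ : ℝ → ℝ)
    (hx0 : x 0 = x₀) (hz0 : z 0 = z₀) (hθ0 : θ 0 = Real.pi)
    (hxpos : ∀ s ∈ Dom sm, 0 < x s)
    (hzmem : ∀ s ∈ Dom sm, a < (z s : EReal))
    (hdx : ∀ s ∈ Dom sm, HasDerivWithinAt x (Real.cos (θ s)) (Dom sm) s)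
    (hdz : ∀ s ∈ Dom sm, HasDerivWithinAt z (Real.sin (θ s)) (Dom sm) s)
    (hdθ : ∀ s ∈ Dom sm, HasDerivWithinAt θ
      (φ' (z s) * Real.cos (θ s) - Real.sin (θ s) / x s) (Dom sm) s)
    -- maximality: no solution with the same initial data on a larger interval
    (hmax : ∀ sm' : ℝ≥0∞, sm < sm' →
      ¬ ∃ x' z' θ' : ℝ → ℝ,
        x' 0 = x₀ ∧ z' 0 = z₀ ∧ θ' 0 = Real.pi ∧
        (∀ s ∈ Dom sm', 0 < x' s) ∧
        (∀ s ∈ Dom sm', a < (z' s : EReal)) ∧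
        (∀ s ∈ Dom sm', HasDerivWithinAt x' (Real.cos (θ' s)) (Dom sm') s) ∧
        (∀ s ∈ Dom sm', HasDerivWithinAt z' (Real.sin (θ' s)) (Dom sm') s) ∧
        (∀ s ∈ Dom sm', HasDerivWithinAt θ'
          (φ' (z' s) * Real.cos (θ' s) - Real.sin (θ' s) / x' s) (Dom sm') s))
    -- `s₀` is the first time at which `θ = π/2`
    (s₀ : ℝ) (hs₀pos : 0 < s₀) (hs₀mem : ENNReal.ofReal s₀ < sm)
    (hs₀ : θ s₀ = Real.pi / 2)
    (hfirst : ∀ s : ℝ, 0 < s → s < s₀ → θ s ≠ Real.pi / 2) :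
    -- (i)
    (∀ s : ℝ, s₀ < s → s ∈ Dom sm → 0 < θ s ∧ θ s < Real.pi / 2) ∧
    -- (ii)
    (∃ s₁ : ℝ, s₀ < s₁ ∧ s₁ ∈ Dom sm ∧
      φ' (z s₁) * Real.cos (θ s₁) - Real.sin (θ s₁) / x s₁ = 0 ∧
      (∀ s : ℝ, s₀ < s → s ∈ Dom sm → θ s₁ ≤ θ s) ∧
      (∀ s : ℝ, s₁ < s → s ∈ Dom sm →
        0 < φ' (z s) * Real.cos (θ s) - Real.sin (θ s) / x s)) :=
  stmt_13_general a φ φ' φ'' hφsm hφd hφd2 hφ'pos hφ''nn x₀ z₀ sm x z θ hx0 hz0 hθ0 hxpos hzmem hdx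
    hdz hdθ hmax s₀ hs₀pos hs₀mem hs₀
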